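/- arXiv:1903.01004 — 2 statements merged into one kernel-verified Lean document; each statement's English description precedes it below -/
import Mathlib

section
/- (Equality of π_greedy and π_hull) Let A be a finite nonempty set, Q : A → ℝ² with coordinates Q(a) = (Q_c(a), Q_r(a)), and β ∈ ℝ with min_{a∈A} Q_c(a) ≤ β. Let Q⁻ ⊆ Q(A) be the set of undominated value points, F the top frontier of C²(Q⁻), and F_Q = F ∩ Q(A). Then: (i) if there exist a¹, a² ∈ A whose value points q¹ = Q(a¹), q² = Q(a²) are consecutive points of F_Q in increasing cost order with q¹_c ≤ β < q²_c, then the two-point mixture ρ = (1−p)δ_{a¹} + p δ_{a²} with p = (β − q¹_c)/(q²_c − q¹_c) solves the nested program: it maximizes E_{a∼ρ'}[Q_r(a)] over probability distributions ρ' on A subject to E_{a∼ρ'}[Q_c(a)] ≤ β, and among such maximizers it minimizes E_{a∼ρ'}[Q_c(a)]; (ii) otherwise (every point of F_Q has cost at most β), the Dirac distribution at an action a^± whose value point maximizes Q_r over Q(A) with minimal Q_c among such maximizers solves the nested program. -/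
/-- A probability distribution on a finite type. -/
def IsPMFf {A : Type} [Fintype A] (ρ : A → ℝ) : Prop :=
  (∀ a, 0 ≤ ρ a) ∧ ∑ a, ρ a = 1

/-- Expectation `E_{a∼ρ}[f(a)] = Σ_a ρ(a) f(a)`. -/
noncomputable def Eexp {A : Type} [Fintype A] (ρ : A → ℝ) (f : A → ℝ) : ℝ :=
  ∑ a, ρ a * f a

/-- `ρ` solves the nested program: among probability distributions `ρ'` on `A` with
`E_{a∼ρ'}[Q_c(a)] ≤ β`, it maximizes `E_{a∼ρ'}[Q_r(a)]`, and among those maximizers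
it minimizes `E_{a∼ρ'}[Q_c(a)]`. -/
def SolvesNested {A : Type} [Fintype A] (Qc Qr : A → ℝ) (β : ℝ) (ρ : A → ℝ) : Prop :=
  IsPMFf ρ ∧ Eexp ρ Qc ≤ β ∧
  (∀ ρ', IsPMFf ρ' → Eexp ρ' Qc ≤ β → Eexp ρ' Qr ≤ Eexp ρ Qr) ∧
  (∀ ρ', IsPMFf ρ' → Eexp ρ' Qc ≤ β → Eexp ρ' Qr = Eexp ρ Qr → Eexp ρ Qc ≤ Eexp ρ' Qc)
/-- `C²(X)`: convex combinations of at most two points of `X` (points of `ℝ²` are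
written `q = (q_c, q_r)`, cost first, reward second). -/
def C2 (X : Set (ℝ × ℝ)) : Set (ℝ × ℝ) :=
  {p | ∃ q1 ∈ X, ∃ q2 ∈ X, ∃ l : ℝ, l ∈ Set.Icc (0 : ℝ) 1 ∧ p = (1 - l) • q1 + l • q2}

/-- Top frontier of a set `Y ⊆ ℝ²`:
`{q ∈ Y | there is no q' ∈ Y with q'_c = q_c and q'_r > q_r}`. -/
def topFrontier (Y : Set (ℝ × ℝ)) : Set (ℝ × ℝ) :=
  {q ∈ Y | ¬ ∃ q' ∈ Y, q'.1 = q.1 ∧ q.2 < q'.2}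

/-- `q` is the dominant point `q^±` of `X`: a point of `X` with minimal cost `q_c`
among those maximizing the reward `q_r` over `X`. -/
def IsDominant (X : Set (ℝ × ℝ)) (q : ℝ × ℝ) : Prop :=
  q ∈ X ∧ (∀ q' ∈ X, q'.2 ≤ q.2) ∧ (∀ q' ∈ X, q'.2 = q.2 → q.1 ≤ q'.1)

/-- Undominated points `Q⁻ = X \ Q⁺` where `Q⁺ = {q ∈ X : q_c > q^±_c}`. -/
def Qminus (X : Set (ℝ × ℝ)) (qpm : ℝ × ℝ) : Set (ℝ × ℝ) :=
  X \ {q ∈ X | qpm.1 < q.1}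

section helpers
variable {A : Type} [Fintype A] [DecidableEq A]

lemma my_sum_dirac (a0 : A) (f : A → ℝ) :
    ∑ a, (if a = a0 then (1:ℝ) else 0) * f a = f a0 := by
  simp [ite_mul]

omit [DecidableEq A] in
lemma my_Eexp_affine (ρ : A → ℝ) (hsum : ∑ a, ρ a = 1) (c m : ℝ) (f : A → ℝ) :
    ∑ a, ρ a * (c + m * f a) = c + m * ∑ a, ρ a * f a := by
  have : ∀ a ∈ Finset.univ, ρ a * (c + m * f a) = ρ a * c + m * (ρ a * f a) := by
    intro a _; ring
  rw [Finset.sum_congr rfl this, Finset.sum_add_distrib, ← Finset.sum_mul, hsum,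
    ← Finset.mul_sum]
  ring

omit [DecidableEq A] in
lemma my_Eexp_support (ρ f : A → ℝ) (c : ℝ)
    (h0 : ∀ a, 0 ≤ ρ a) (hsum : ∑ a, ρ a = 1)
    (hf : ∀ a, f a ≤ c) (heq : ∑ a, ρ a * f a = c) :
    ∀ a, ρ a ≠ 0 → f a = c := by
  have hz : ∑ a, ρ a * (c - f a) = 0 := by
    have : ∀ a ∈ Finset.univ, ρ a * (c - f a) = ρ a * c - ρ a * f a := by intro a _; ring
    rw [Finset.sum_congr rfl this, Finset.sum_sub_distrib, ← Finset.sum_mul, hsum, heq]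
    ring
  have hnn : ∀ a ∈ Finset.univ, 0 ≤ ρ a * (c - f a) := fun a _ =>
    mul_nonneg (h0 a) (by linarith [hf a])
  intro a ha
  have := (Finset.sum_eq_zero_iff_of_nonneg hnn).mp hz a (Finset.mem_univ a)
  rcases mul_eq_zero.mp this with h | h
  · exact absurd h ha
  · linarith

lemma my_Eexp_mix (a1 a2 : A) (x y : ℝ) (f : A → ℝ) :
    ∑ a, (x * (if a = a1 then (1:ℝ) else 0) + y * (if a = a2 then 1 else 0)) * f a
      = x * f a1 + y * f a2 := by
  have : ∀ a ∈ Finset.univ,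
      (x * (if a = a1 then (1:ℝ) else 0) + y * (if a = a2 then 1 else 0)) * f a
      = x * ((if a = a1 then (1:ℝ) else 0) * f a) + y * ((if a = a2 then 1 else 0) * f a) := by
    intro a _; ring
  rw [Finset.sum_congr rfl this, Finset.sum_add_distrib, ← Finset.mul_sum, ← Finset.mul_sum,
    my_sum_dirac, my_sum_dirac]

end helpers

lemma my_comb_fst (l : ℝ) (p q : ℝ × ℝ) : ((1-l) • p + l • q).1 = (1-l)*p.1 + l*q.1 := by
  simp [smul_eq_mul]

lemma my_comb_snd (l : ℝ) (p q : ℝ × ℝ) : ((1-l) • p + l • q).2 = (1-l)*p.2 + l*q.2 := by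
  simp [smul_eq_mul]

lemma mem_C2_self {X : Set (ℝ × ℝ)} {q : ℝ × ℝ} (h : q ∈ X) : q ∈ C2 X :=
  ⟨q, h, q, h, 0, ⟨le_refl 0, zero_le_one⟩, by simp⟩


set_option maxHeartbeats 2000000 in
/-- (Equality of `π_greedy` and `π_hull`.) Let `Q : A → ℝ²` with `Q(a) = (Q_c(a), Q_r(a))`
and `β` with `min_a Q_c(a) ≤ β`; let `q^±` be the dominant point of `Q(A)`, `Q⁻` the
undominated value points, `F` the top frontier of `C²(Q⁻)` and `F_Q = F ∩ Q(A)`. Then: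
(i) if `q¹ = Q(a¹)`, `q² = Q(a²)` are consecutive points of `F_Q` in increasing cost
order with `q¹_c ≤ β < q²_c`, the two-point mixture `(1−p)δ_{a¹} + p δ_{a²}` with
`p = (β − q¹_c)/(q²_c − q¹_c)` solves the nested greedy program; (ii) otherwise (every
point of `F_Q` has cost at most `β`), the Dirac distribution at an action `a^±` whose
value point is dominant solves it. -/
theorem pi_greedy_eq_pi_hull {A : Type} [Fintype A] [Nonempty A] [DecidableEq A]
    (Q : A → ℝ × ℝ) (β : ℝ) (hβ : ∃ a, (Q a).1 ≤ β)
    (qpm : ℝ × ℝ) (hqpm : IsDominant (Set.range Q) qpm) :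
    (∀ a1 a2 : A,
      Q a1 ∈ topFrontier (C2 (Qminus (Set.range Q) qpm)) ∩ Set.range Q →
      Q a2 ∈ topFrontier (C2 (Qminus (Set.range Q) qpm)) ∩ Set.range Q →
      (Q a1).1 ≤ β → β < (Q a2).1 →
      (∀ q ∈ topFrontier (C2 (Qminus (Set.range Q) qpm)) ∩ Set.range Q,
        ¬ ((Q a1).1 < q.1 ∧ q.1 < (Q a2).1)) →
      SolvesNested (fun a => (Q a).1) (fun a => (Q a).2) β
        (fun a =>
          (1 - (β - (Q a1).1) / ((Q a2).1 - (Q a1).1)) * (if a = a1 then 1 else 0) +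
          ((β - (Q a1).1) / ((Q a2).1 - (Q a1).1)) * (if a = a2 then 1 else 0))) ∧
    ((∀ q ∈ topFrontier (C2 (Qminus (Set.range Q) qpm)) ∩ Set.range Q, q.1 ≤ β) →
      ∀ apm : A, IsDominant (Set.range Q) (Q apm) →
        SolvesNested (fun a => (Q a).1) (fun a => (Q a).2) β
          (fun a => if a = apm then 1 else 0)) := by
  classical
  have hQm_cost : ∀ q ∈ Qminus (Set.range Q) qpm, q.1 ≤ qpm.1 :=
    fun q hq => not_lt.mp (fun hlt => hq.2 ⟨hq.1, hlt⟩)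
  have hC2_cost : ∀ q ∈ C2 (Qminus (Set.range Q) qpm), q.1 ≤ qpm.1 := by
    rintro q ⟨qa, ha, qb, hb, l, ⟨hl0, hl1⟩, rfl⟩
    rw [my_comb_fst]
    nlinarith [hQm_cost qa ha, hQm_cost qb hb]
  have h_memQm : ∀ a : A, (Q a).1 ≤ qpm.1 → Q a ∈ Qminus (Set.range Q) qpm :=
    fun a hle => ⟨⟨a, rfl⟩, fun hc => (not_lt.mpr hle) hc.2⟩
  have hqpmQm : qpm ∈ Qminus (Set.range Q) qpm := ⟨hqpm.1, fun hc => lt_irrefl _ hc.2⟩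
  have hqpm_r : ∀ a : A, (Q a).2 ≤ qpm.2 := fun a => hqpm.2.1 _ ⟨a, rfl⟩
  constructor
  · -- part (i)
    intro a1 a2 h1 h2 hb1 hb2 hconsec
    obtain ⟨h1F, -⟩ := h1
    obtain ⟨h2F, -⟩ := h2
    have hlt : (Q a1).1 < (Q a2).1 := lt_of_le_of_lt hb1 hb2
    have hd : (0:ℝ) < (Q a2).1 - (Q a1).1 := by linarith
    set q1 : ℝ × ℝ := Q a1 with hq1def
    set q2 : ℝ × ℝ := Q a2 with hq2def
    set p : ℝ := (β - q1.1) / (q2.1 - q1.1) with hpdef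
    have hp0 : 0 ≤ p := div_nonneg (by linarith) hd.le
    have hp1 : p < 1 := by
      rw [hpdef, div_lt_one hd]; linarith
    have hpd : p * (q2.1 - q1.1) = β - q1.1 := div_mul_cancel₀ _ hd.ne'
    set m : ℝ := (q2.2 - q1.2) / (q2.1 - q1.1) with hmdef
    have hmd : m * (q2.1 - q1.1) = q2.2 - q1.2 := div_mul_cancel₀ _ hd.ne'
    set c : ℝ := q1.2 - m * q1.1 with hcdef
    have hline1 : q1.2 = c + m * q1.1 := by rw [hcdef]; ring
    have hline2 : q2.2 = c + m * q2.1 := by rw [hcdef]; linarith [hmd]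
    have hq2le : q2.1 ≤ qpm.1 := hC2_cost _ h2F.1
    have hq1le : q1.1 ≤ qpm.1 := by linarith
    have hq1Qm : q1 ∈ Qminus (Set.range Q) qpm := h_memQm a1 hq1le
    have hq2Qm : q2 ∈ Qminus (Set.range Q) qpm := h_memQm a2 hq2le
    -- slope is nonnegative
    have hm0 : 0 ≤ m := by
      rw [hmdef]
      apply div_nonneg _ hd.le
      by_contra hneg
      push_neg at hneg
      have hq2r : q2.2 < q1.2 := by linarith
      have hq1r : q1.2 ≤ qpm.2 := hqpm_r a1
      rcases eq_or_lt_of_le hq2le with heq | hlt2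
      · exact h2F.2 ⟨qpm, mem_C2_self hqpmQm, heq.symm, by linarith⟩
      · set l : ℝ := (q2.1 - q1.1) / (qpm.1 - q1.1) with hldef
        have hden : (0:ℝ) < qpm.1 - q1.1 := by linarith
        have hl0 : 0 < l := div_pos hd hden
        have hl1 : l < 1 := by rw [hldef, div_lt_one hden]; linarith
        have hld : l * (qpm.1 - q1.1) = q2.1 - q1.1 := div_mul_cancel₀ _ hden.ne'
        refine h2F.2 ⟨(1 - l) • q1 + l • qpm,
          ⟨q1, hq1Qm, qpm, hqpmQm, l, ⟨hl0.le, hl1.le⟩, rfl⟩, ?_, ?_⟩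
        · rw [my_comb_fst]; linarith
        · rw [my_comb_snd]; nlinarith
    -- Lemma A : every undominated point lies below/on the line through q1, q2
    have hQmA : ∀ q ∈ Qminus (Set.range Q) qpm, q.2 ≤ c + m * q.1 := by
      by_contra hcon
      push_neg at hcon
      obtain ⟨q3, hq3Qm, hq3⟩ := hcon
      -- any strictly-above point has cost strictly between q1 and q2
      have hbet : ∀ q ∈ Qminus (Set.range Q) qpm, c + m * q.1 < q.2 →
          q1.1 < q.1 ∧ q.1 < q2.1 := by
        intro q hq hgt
        constructor
        · by_contra hle
          push_neg at hle
          rcases eq_or_lt_of_le hle with heq | hlt'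
          · exact h1F.2 ⟨q, mem_C2_self hq, heq, by rw [heq] at hgt; linarith⟩
          · set l : ℝ := (q1.1 - q.1) / (q2.1 - q.1) with hldef
            have hden : (0:ℝ) < q2.1 - q.1 := by linarith
            have hl0 : 0 < l := div_pos (by linarith) hden
            have hl1 : l < 1 := by rw [hldef, div_lt_one hden]; linarith
            have hld : l * (q2.1 - q.1) = q1.1 - q.1 := div_mul_cancel₀ _ hden.ne'
            refine h1F.2 ⟨(1 - l) • q + l • q2,
              ⟨q, hq, q2, hq2Qm, l, ⟨hl0.le, hl1.le⟩, rfl⟩, ?_, ?_⟩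
            · rw [my_comb_fst]; linarith
            · rw [my_comb_snd]
              have hz : (1-l) * q.1 + l * q2.1 = q1.1 := by linarith
              have hzm : m * ((1-l) * q.1 + l * q2.1) = m * q1.1 := by rw [hz]
              nlinarith [mul_lt_mul_of_pos_left hgt (by linarith : (0:ℝ) < 1 - l),
                mul_le_mul_of_nonneg_left hline2.le hl0.le]
        · by_contra hle
          push_neg at hle
          rcases eq_or_lt_of_le hle with heq | hlt'
          · exact h2F.2 ⟨q, mem_C2_self hq, heq.symm, by rw [← heq] at hgt; linarith⟩
          · set l : ℝ := (q2.1 - q1.1) / (q.1 - q1.1) with hldef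
            have hden : (0:ℝ) < q.1 - q1.1 := by linarith
            have hl0 : 0 < l := div_pos hd hden
            have hl1 : l < 1 := by rw [hldef, div_lt_one hden]; linarith
            have hld : l * (q.1 - q1.1) = q2.1 - q1.1 := div_mul_cancel₀ _ hden.ne'
            refine h2F.2 ⟨(1 - l) • q1 + l • q,
              ⟨q1, hq1Qm, q, hq, l, ⟨hl0.le, hl1.le⟩, rfl⟩, ?_, ?_⟩
            · rw [my_comb_fst]; linarith
            · rw [my_comb_snd]
              have hz : (1-l) * q1.1 + l * q.1 = q2.1 := by linarith
              have hzm : m * ((1-l) * q1.1 + l * q.1) = m * q2.1 := by rw [hz]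
              nlinarith [mul_lt_mul_of_pos_left hgt hl0,
                mul_le_mul_of_nonneg_left hline1.le (by linarith : (0:ℝ) ≤ 1 - l)]
      -- maximizer of the excess over the finite set
      obtain ⟨a3, ha3⟩ := hq3Qm.1
      set T : Finset A := Finset.univ.filter
        (fun a => (Q a).1 ≤ qpm.1 ∧ c + m * (Q a).1 < (Q a).2) with hTdef
      have hTne : T.Nonempty := by
        refine ⟨a3, Finset.mem_filter.mpr ⟨Finset.mem_univ _, ?_, ?_⟩⟩
        · rw [ha3]; exact hQm_cost _ hq3Qm
        · rw [ha3]; exact hq3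
      obtain ⟨astar, hastarT, hmax⟩ :=
        Finset.exists_max_image T (fun a => (Q a).2 - m * (Q a).1) hTne
      have hastar := Finset.mem_filter.mp hastarT
      set qs : ℝ × ℝ := Q astar with hqsdef
      have hqsQm : qs ∈ Qminus (Set.range Q) qpm := h_memQm astar hastar.2.1
      have hqs_gt : c + m * qs.1 < qs.2 := hastar.2.2
      have hqsF : qs ∈ topFrontier (C2 (Qminus (Set.range Q) qpm)) := by
        refine ⟨mem_C2_self hqsQm, ?_⟩
        rintro ⟨q', ⟨qa, hqa, qb, hqb, l, ⟨hl0, hl1⟩, rfl⟩, hceq, hrgt⟩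
        rw [my_comb_fst] at hceq
        rw [my_comb_snd] at hrgt
        obtain ⟨aa, haa⟩ := hqa.1
        obtain ⟨ab, hab⟩ := hqb.1
        rcases lt_or_ge (qs.2 - m * qs.1) (qa.2 - m * qa.1) with hA | hA
        · have haaT : aa ∈ T := Finset.mem_filter.mpr
            ⟨Finset.mem_univ _, by rw [haa]; exact hQm_cost _ hqa, by rw [haa]; linarith⟩
          have := hmax aa haaT
          rw [haa] at this
          linarith
        · rcases lt_or_ge (qs.2 - m * qs.1) (qb.2 - m * qb.1) with hB | hB
          · have habT : ab ∈ T := Finset.mem_filter.mpr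
              ⟨Finset.mem_univ _, by rw [hab]; exact hQm_cost _ hqb, by rw [hab]; linarith⟩
            have := hmax ab habT
            rw [hab] at this
            linarith
          · have hzm : m * ((1-l) * qa.1 + l * qb.1) = m * qs.1 := by rw [hceq]
            nlinarith [mul_le_mul_of_nonneg_left hA (by linarith : (0:ℝ) ≤ 1 - l),
              mul_le_mul_of_nonneg_left hB hl0]
      have := hconsec qs ⟨hqsF, ⟨astar, rfl⟩⟩
      exact this (hbet qs hqsQm hqs_gt)
    -- key bound over all actions
    have hkey : ∀ a : A, (Q a).2 ≤ c + m * (Q a).1 := by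
      intro a
      rcases le_or_gt (Q a).1 qpm.1 with h | h
      · exact hQmA _ (h_memQm a h)
      · have h1' : qpm.2 ≤ c + m * qpm.1 := hQmA qpm hqpmQm
        have h2' := hqpm_r a
        nlinarith [mul_le_mul_of_nonneg_left h.le hm0]
    -- expectations of the mixture
    simp only [SolvesNested, IsPMFf, Eexp]
    have hEc : ∑ a, ((1 - p) * (if a = a1 then (1:ℝ) else 0) + p * (if a = a2 then 1 else 0))
        * (Q a).1 = β := by
      rw [my_Eexp_mix]; show (1-p) * q1.1 + p * q2.1 = β; linarith
    have hEr : ∑ a, ((1 - p) * (if a = a1 then (1:ℝ) else 0) + p * (if a = a2 then 1 else 0))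
        * (Q a).2 = c + m * β := by
      rw [my_Eexp_mix]
      show (1-p) * q1.2 + p * q2.2 = c + m * β
      have hmp : m * (p * (q2.1 - q1.1)) = m * (β - q1.1) := by rw [hpd]
      nlinarith [hline1, hline2]
    refine ⟨⟨?_, ?_⟩, ?_, ?_, ?_⟩
    · intro a; split_ifs <;> nlinarith
    · have h := my_Eexp_mix a1 a2 (1-p) p (fun _ => (1:ℝ))
      simp only [mul_one] at h
      rw [h]; ring
    · rw [hEc]
    · intro ρ' hρ' hc'
      rw [hEr]
      have hub : ∑ a, ρ' a * (Q a).2 ≤ c + m * ∑ a, ρ' a * (Q a).1 := by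
        rw [← my_Eexp_affine ρ' hρ'.2 c m]
        exact Finset.sum_le_sum fun a _ =>
          mul_le_mul_of_nonneg_left (hkey a) (hρ'.1 a)
      nlinarith [mul_le_mul_of_nonneg_left hc' hm0]
    · intro ρ' hρ' hc' hr'
      rw [hEr] at hr'
      rw [hEc]
      have hub : ∑ a, ρ' a * (Q a).2 ≤ c + m * ∑ a, ρ' a * (Q a).1 := by
        rw [← my_Eexp_affine ρ' hρ'.2 c m]
        exact Finset.sum_le_sum fun a _ =>
          mul_le_mul_of_nonneg_left (hkey a) (hρ'.1 a)
      rcases hm0.eq_or_lt with hm | hm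
      · -- m = 0 : contradiction with the budget
        have hk' : ∀ a : A, (Q a).2 ≤ c := by
          intro a; have := hkey a; rw [← hm] at this; linarith
        have hrc : ∑ a, ρ' a * (Q a).2 = c := by rw [hr', ← hm]; ring
        have hsupp := my_Eexp_support ρ' (fun a => (Q a).2) c hρ'.1 hρ'.2 hk' hrc
        have hqpm2 : qpm.2 = c := by
          have ha' : qpm.2 ≤ c + m * qpm.1 := hQmA qpm hqpmQm
          have hb' : q1.2 ≤ qpm.2 := hqpm_r a1
          rw [← hm] at ha' hline1
          simp only [zero_mul, add_zero] at ha' hline1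
          linarith
        have hcostlb : ∀ a, ρ' a * qpm.1 ≤ ρ' a * (Q a).1 := by
          intro a
          rcases eq_or_ne (ρ' a) 0 with h | h
          · rw [h]; simp
          · have h2'' : (Q a).2 = qpm.2 := (hsupp a h).trans hqpm2.symm
            exact mul_le_mul_of_nonneg_left (hqpm.2.2 _ ⟨a, rfl⟩ h2'') (hρ'.1 a)
        have hlb : qpm.1 ≤ ∑ a, ρ' a * (Q a).1 := by
          calc qpm.1 = ∑ a, ρ' a * qpm.1 := by rw [← Finset.sum_mul, hρ'.2, one_mul]
            _ ≤ ∑ a, ρ' a * (Q a).1 := Finset.sum_le_sum fun a _ => hcostlb a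
        linarith
      · have : m * β ≤ m * ∑ a, ρ' a * (Q a).1 := by linarith
        exact le_of_mul_le_mul_left this hm
  · -- part (ii)
    intro hall apm hapm
    have hre : (Q apm).2 = qpm.2 := le_antisymm (hqpm_r apm) (hapm.2.1 _ hqpm.1)
    have hce : (Q apm).1 = qpm.1 :=
      le_antisymm (hapm.2.2 _ hqpm.1 hre.symm) (hqpm.2.2 _ ⟨apm, rfl⟩ hre)
    have hmemQm : Q apm ∈ Qminus (Set.range Q) qpm := h_memQm apm (le_of_eq hce)
    have hmemF : Q apm ∈ topFrontier (C2 (Qminus (Set.range Q) qpm)) ∩ Set.range Q := by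
      refine ⟨⟨mem_C2_self hmemQm, ?_⟩, ⟨apm, rfl⟩⟩
      rintro ⟨q', ⟨qa, hqa, qb, hqb, l, ⟨hl0, hl1⟩, rfl⟩, -, hgt⟩
      rw [my_comb_snd] at hgt
      have ha' := hqpm.2.1 qa hqa.1
      have hb' := hqpm.2.1 qb hqb.1
      rw [hre] at hgt
      nlinarith
    have hcostβ : (Q apm).1 ≤ β := hall _ hmemF
    simp only [SolvesNested, IsPMFf, Eexp]
    refine ⟨⟨fun a => by split_ifs <;> norm_num, by simp⟩, ?_, ?_, ?_⟩
    · rw [my_sum_dirac]; exact hcostβ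
    · intro ρ' hρ' hc'
      rw [my_sum_dirac]
      calc ∑ a, ρ' a * (Q a).2 ≤ ∑ a, ρ' a * qpm.2 :=
            Finset.sum_le_sum fun a _ => mul_le_mul_of_nonneg_left (hqpm_r a) (hρ'.1 a)
        _ = qpm.2 := by rw [← Finset.sum_mul, hρ'.2, one_mul]
        _ = (Q apm).2 := hre.symm
    · intro ρ' hρ' hc' hr'
      rw [my_sum_dirac] at hr' ⊢
      rw [hre] at hr'
      have hsupp := my_Eexp_support ρ' (fun a => (Q a).2) qpm.2 hρ'.1 hρ'.2 hqpm_r hr'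
      have hcost : ∀ a, ρ' a * qpm.1 ≤ ρ' a * (Q a).1 := by
        intro a
        rcases eq_or_ne (ρ' a) 0 with h | h
        · rw [h]; simp
        · exact mul_le_mul_of_nonneg_left (hqpm.2.2 _ ⟨a, rfl⟩ (hsupp a h)) (hρ'.1 a)
      calc (Q apm).1 = qpm.1 := hce
        _ = ∑ a, ρ' a * qpm.1 := by rw [← Finset.sum_mul, hρ'.2, one_mul]
        _ ≤ ∑ a, ρ' a * (Q a).1 := Finset.sum_le_sum fun a _ => hcost a
end

section
/- Let A be a finite nonempty set, Q_r, Q_c : A → ℝ, and β ∈ ℝ such that some probability distribution ρ on A satisfies E_{a∼ρ}[Q_c(a)] ≤ β. Then the nested program — over probability distributions ρ on A with E_{a∼ρ}[Q_c(a)] ≤ β, first maximize E_{a∼ρ}[Q_r(a)], then among the maximizers minimize E_{a∼ρ}[Q_c(a)] — admits a solution that is a mixture of at most two Dirac distributions, i.e. of the form (1−λ)δ_{a¹} + λδ_{a²} with a¹, a² ∈ A and λ ∈ [0,1]. -/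
/-!
Compactness of the feasible set gives a solution `ρ` of the nested program. If a distribution
charges three points, two homogeneous linear equations in three unknowns give a nonzero signed
measure on them with total mass `0` that leaves `E[Q_c]` unchanged; moving along it, in the
direction in which `E[Q_r]` does not decrease, until a coordinate vanishes shrinks the support.
Iterating from `ρ` reaches a distribution on at most two points with the same `E[Q_c]` and no
smaller `E[Q_r]`, and such a distribution is again a solution.
-/

open Function

theorem Eexp_eq_dotProduct {A : Type} [Fintype A] (ρ f : A → ℝ) : Eexp ρ f = ρ ⬝ᵥ f :=
  rfl

theorem continuous_Eexp {A : Type} [Fintype A] (f : A → ℝ) :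
    Continuous fun ρ : A → ℝ => Eexp ρ f := by
  unfold Eexp
  fun_prop

theorem IsPMFf.le_one {A : Type} [Fintype A] {ρ : A → ℝ} (hρ : IsPMFf ρ) (a : A) : ρ a ≤ 1 :=
  hρ.2 ▸ Finset.single_le_sum (fun x _ => hρ.1 x) (Finset.mem_univ a)

theorem IsPMFf.support_nonempty {A : Type} [Fintype A] {ρ : A → ℝ} (hρ : IsPMFf ρ) :
    (support ρ).Nonempty := by
  obtain ⟨a, -, ha⟩ := Finset.exists_ne_zero_of_sum_ne_zero (hρ.2.trans_ne one_ne_zero)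
  exact ⟨a, ha⟩

def twoPointMix {A : Type} [DecidableEq A] (a₁ a₂ : A) (l : ℝ) : A → ℝ :=
  fun a => (1 - l) * (if a = a₁ then 1 else 0) + l * (if a = a₂ then 1 else 0)

theorem IsPMFf.eq_twoPointMix {A : Type} [Fintype A] [DecidableEq A] {ρ : A → ℝ}
    (hρ : IsPMFf ρ) {a₁ a₂ : A} (hsupp : support ρ ⊆ {a₁, a₂}) :
    ρ = twoPointMix a₁ a₂ (ρ a₂) := by
  have hzero : ∀ x, x ≠ a₁ → x ≠ a₂ → ρ x = 0 := fun x h₁ h₂ =>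
    notMem_support.1 fun hx => by rcases hsupp hx with h | h <;> contradiction
  funext x
  rcases eq_or_ne a₁ a₂ with rfl | hne
  · have h₁ : ρ a₁ = 1 := by
      rw [← hρ.2, Fintype.sum_eq_single a₁ fun x hx => hzero x hx hx]
    by_cases hx : x = a₁ <;> simp [twoPointMix, hx, h₁, hzero]
  · have h₁₂ : ρ a₁ + ρ a₂ = 1 := by
      rw [← hρ.2, Fintype.sum_eq_add a₁ a₂ hne fun x hx => hzero x hx.1 hx.2]
    by_cases hx₁ : x = a₁
    · subst hx₁; simp [twoPointMix, hne]; linarith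
    · by_cases hx₂ : x = a₂
      · subst hx₂; simp [twoPointMix, hx₁]
      · simp [twoPointMix, hx₁, hx₂, hzero x hx₁ hx₂]

theorem Set.exists_subset_pair_of_ncard_le_two {α : Type*} {s : Set α} (hne : s.Nonempty)
    (h2 : s.ncard ≤ 2) (hs : s.Finite := by toFinite_tac) : ∃ a b : α, s ⊆ {a, b} := by
  obtain ⟨a, ha⟩ := hne
  have : Nonempty α := ⟨a⟩
  obtain ⟨b, hb⟩ := (Set.ncard_le_one_iff_subset_singleton hs.sdiff).1
    (by rw [Set.ncard_sdiff_singleton_of_mem ha]; omega)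
  exact ⟨a, b, Set.sdiff_subset_iff.1 hb⟩

theorem exists_add_mul_nonneg_and_eq_zero {ι 𝕜 : Type*} [Fintype ι] [Field 𝕜] [LinearOrder 𝕜]
    [IsStrictOrderedRing 𝕜] {ρ d : ι → 𝕜} (hρ : ∀ i, 0 ≤ ρ i) (hd : ∃ i, d i < 0) :
    ∃ t : 𝕜, 0 ≤ t ∧ (∀ i, 0 ≤ ρ i + t * d i) ∧ ∃ i₀, d i₀ < 0 ∧ ρ i₀ + t * d i₀ = 0 := by
  classical
  obtain ⟨i₀, hi₀, hmin⟩ := (Finset.univ.filter (d · < 0)).exists_min_image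
    (fun i => ρ i / -d i) (by simpa [Finset.Nonempty] using hd)
  simp only [Finset.mem_filter, Finset.mem_univ, true_and] at hi₀ hmin
  refine ⟨ρ i₀ / -d i₀, div_nonneg (hρ i₀) (by linarith), fun i => ?_, i₀, hi₀, ?_⟩
  · rcases lt_or_ge (d i) 0 with hdi | hdi
    · have := (le_div_iff₀ (neg_pos.2 hdi)).1 (hmin i hdi)
      linarith [mul_neg (ρ i₀ / -d i₀) (d i)]
    · exact add_nonneg (hρ i) (mul_nonneg (div_nonneg (hρ i₀) (by linarith)) hdi)
  · field_simp [hi₀.ne]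
    ring

theorem exists_ne_zero_sum_eq_zero_Eexp_eq_zero_of_triple {A : Type} [Fintype A]
    [DecidableEq A] (f : A → ℝ) {a b c : A} (hab : a ≠ b) (hac : a ≠ c) (hbc : b ≠ c) :
    ∃ d : A → ℝ, d ≠ 0 ∧ support d ⊆ {a, b, c} ∧ ∑ x, d x = 0 ∧ Eexp d f = 0 := by
  -- If `f a ≠ f b`, `(p, q, r)` is the cross product of `(1, 1, 1)` and `(f a, f b, f c)`.
  obtain ⟨p, q, r, hpr, hsum, hf⟩ : ∃ p q r : ℝ,
      (p ≠ 0 ∨ r ≠ 0) ∧ p + q + r = 0 ∧ p * f a + q * f b + r * f c = 0 := by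
    by_cases h : f a = f b
    · exact ⟨1, -1, 0, by norm_num, by ring, by rw [h]; ring⟩
    · exact ⟨f b - f c, f c - f a, f a - f b, Or.inr (sub_ne_zero.2 h), by ring, by ring⟩
  refine ⟨Pi.single a p + Pi.single b q + Pi.single c r, fun h => ?_, fun x hx => ?_, ?_, ?_⟩
  · rcases hpr with hp | hr
    · exact hp (by simpa [hab, hac] using congrFun h a)
    · exact hr (by simpa [hac.symm, hbc.symm] using congrFun h c)
  · by_contra hx'
    simp only [Set.mem_insert_iff, Set.mem_singleton_iff, not_or] at hx'
    simp [hx'] at hx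
  · simp [Finset.sum_add_distrib, hsum]
  · simp [Eexp_eq_dotProduct, add_dotProduct, hf]

theorem IsPMFf.exists_support_ssubset {A : Type} [Fintype A] {ρ d : A → ℝ} (hρ : IsPMFf ρ)
    (Qc Qr : A → ℝ) (hd : d ≠ 0) (hdsupp : support d ⊆ support ρ) (hsum : ∑ x, d x = 0)
    (hc : Eexp d Qc = 0) :
    ∃ ρ', IsPMFf ρ' ∧ Eexp ρ' Qc = Eexp ρ Qc ∧ Eexp ρ Qr ≤ Eexp ρ' Qr ∧
      support ρ' ⊂ support ρ := by
  wlog hr : 0 ≤ Eexp d Qr generalizing d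
  · refine this (neg_ne_zero.2 hd) (by rwa [support_neg]) (by simp [hsum]) ?_ ?_ <;>
      simp only [Eexp_eq_dotProduct, neg_dotProduct] at hc hr ⊢ <;> linarith
  obtain ⟨x, -, hx⟩ := Finset.exists_pos_of_sum_zero_of_exists_nonzero (s := Finset.univ) (-d)
    (by simp [hsum]) (by simpa [funext_iff] using hd)
  obtain ⟨t, ht, hnonneg, x₀, hdx₀, hx₀⟩ :=
    exists_add_mul_nonneg_and_eq_zero hρ.1 ⟨x, neg_pos.1 hx⟩
  refine ⟨ρ + t • d, ⟨hnonneg, ?_⟩, ?_, ?_, ?_⟩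
  · simp [Finset.sum_add_distrib, ← Finset.mul_sum, hsum, hρ.2]
  · simp only [Eexp_eq_dotProduct, add_dotProduct, smul_dotProduct] at hc ⊢
    simp [hc]
  · simp only [Eexp_eq_dotProduct, add_dotProduct, smul_dotProduct] at hr ⊢
    simpa using mul_nonneg ht hr
  · refine (Set.ssubset_iff_of_subset ((support_add _ _).trans
      (Set.union_subset subset_rfl ((support_smul_subset_right _ _).trans hdsupp)))).2
      ⟨x₀, hdsupp hdx₀.ne, by simpa using hx₀⟩

theorem IsPMFf.exists_ncard_support_le_two {A : Type} [Fintype A] [DecidableEq A] {ρ : A → ℝ}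
    (hρ : IsPMFf ρ) (Qc Qr : A → ℝ) :
    ∃ μ, IsPMFf μ ∧ (support μ).ncard ≤ 2 ∧ Eexp μ Qc = Eexp ρ Qc ∧ Eexp ρ Qr ≤ Eexp μ Qr := by
  induction hn : (support ρ).ncard using Nat.strong_induction_on generalizing ρ with
  | _ n ih =>
  by_cases h2 : n ≤ 2
  · exact ⟨ρ, hρ, hn ▸ h2, rfl, le_rfl⟩
  obtain ⟨a, ha, b, hb, c, hc, hab, hac, hbc⟩ := (Set.two_lt_ncard).1 (hn ▸ not_le.1 h2)
  obtain ⟨d, hd, hdsupp, hsum, hdc⟩ :=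
    exists_ne_zero_sum_eq_zero_Eexp_eq_zero_of_triple Qc hab hac hbc
  obtain ⟨ρ', hρ', hc', hr', hss⟩ := hρ.exists_support_ssubset Qc Qr hd
    (hdsupp.trans (by simp [Set.insert_subset_iff, ha, hb, hc])) hsum hdc
  obtain ⟨μ, hμ, h2μ, hcμ, hrμ⟩ := ih _ (hn ▸ Set.ncard_lt_ncard hss) hρ' rfl
  exact ⟨μ, hμ, h2μ, hcμ.trans hc', hr'.trans hrμ⟩

theorem IsCompact.exists_isMaxOn_forall_eq_imp_le {X α β : Type*} [TopologicalSpace X]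
    [LinearOrder α] [TopologicalSpace α] [OrderClosedTopology α]
    [LinearOrder β] [TopologicalSpace β] [OrderClosedTopology β]
    {K : Set X} (hK : IsCompact K) (hne : K.Nonempty) {f : X → α} {g : X → β}
    (hf : Continuous f) (hg : Continuous g) :
    ∃ x ∈ K, IsMaxOn f K x ∧ ∀ y ∈ K, f y = f x → g x ≤ g y := by
  obtain ⟨x₁, hx₁, hmax⟩ := hK.exists_isMaxOn hne hf.continuousOn
  obtain ⟨x, ⟨hx, hfx⟩, hmin⟩ := (hK.inter_right (isClosed_singleton.preimage hf)).exists_isMinOn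
      ⟨x₁, hx₁, rfl⟩ hg.continuousOn
  simp only [Set.mem_preimage, Set.mem_singleton_iff] at hfx
  exact ⟨x, hx, isMaxOn_iff.2 fun y hy => (isMaxOn_iff.1 hmax y hy).trans_eq hfx.symm,
    fun y hy hfy => hmin ⟨hy, hfy.trans hfx⟩⟩

theorem exists_solvesNested {A : Type} [Fintype A] (Qr Qc : A → ℝ) (β : ℝ)
    (hfeas : ∃ ρ : A → ℝ, IsPMFf ρ ∧ Eexp ρ Qc ≤ β) : ∃ ρ, SolvesNested Qc Qr β ρ := by
  obtain ⟨ρ, ⟨hρ, hβ⟩, hmax, hmin⟩ :=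
    ((isCompact_stdSimplex ℝ A).inter_right (isClosed_le (continuous_Eexp Qc)
      continuous_const)).exists_isMaxOn_forall_eq_imp_le hfeas (continuous_Eexp Qr)
      (continuous_Eexp Qc)
  exact ⟨ρ, hρ, hβ, fun ρ' h h' => hmax ⟨h, h'⟩, fun ρ' h h' => hmin ρ' ⟨h, h'⟩⟩

theorem SolvesNested.of_Eexp_eq_of_Eexp_le {A : Type} [Fintype A] {Qc Qr : A → ℝ} {β : ℝ}
    {ρ μ : A → ℝ} (hρ : SolvesNested Qc Qr β ρ) (hμ : IsPMFf μ) (hc : Eexp μ Qc = Eexp ρ Qc)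
    (hr : Eexp ρ Qr ≤ Eexp μ Qr) : SolvesNested Qc Qr β μ := by
  obtain ⟨-, hβ, hmax, hmin⟩ := hρ
  have hμr : Eexp μ Qr = Eexp ρ Qr := le_antisymm (hmax μ hμ (hc ▸ hβ)) hr
  exact ⟨hμ, hc ▸ hβ, fun ρ' h h' => hμr ▸ hmax ρ' h h',
    fun ρ' h h' h'' => hc ▸ hmin ρ' h h' (h''.trans hμr)⟩

theorem nested_program_two_point_solution_general {A : Type} [Fintype A]
    [DecidableEq A] (Qr Qc : A → ℝ) (β : ℝ)
    (hfeas : ∃ ρ : A → ℝ, IsPMFf ρ ∧ Eexp ρ Qc ≤ β) :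
    ∃ a1 a2 : A, ∃ l : ℝ, l ∈ Set.Icc (0 : ℝ) 1 ∧
      SolvesNested Qc Qr β
        (fun a => (1 - l) * (if a = a1 then 1 else 0) + l * (if a = a2 then 1 else 0)) := by
  obtain ⟨ρ, hρ⟩ := exists_solvesNested Qr Qc β hfeas
  obtain ⟨μ, hμ, h2, hc, hr⟩ := hρ.1.exists_ncard_support_le_two Qc Qr
  obtain ⟨a₁, a₂, hsupp⟩ := Set.exists_subset_pair_of_ncard_le_two hμ.support_nonempty h2
  refine ⟨a₁, a₂, μ a₂, ⟨hμ.1 a₂, hμ.le_one a₂⟩, ?_⟩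
  have hmix := hρ.of_Eexp_eq_of_Eexp_le hμ hc hr
  rwa [hμ.eq_twoPointMix hsupp] at hmix

/-- If the nested program is feasible, it admits a solution that is a mixture of at
most two Dirac distributions: `(1−λ)δ_{a¹} + λδ_{a²}` with `a¹, a² ∈ A`, `λ ∈ [0,1]`. -/
theorem nested_program_two_point_solution {A : Type} [Fintype A] [Nonempty A]
    [DecidableEq A] (Qr Qc : A → ℝ) (β : ℝ)
    (hfeas : ∃ ρ : A → ℝ, IsPMFf ρ ∧ Eexp ρ Qc ≤ β) :
    ∃ a1 a2 : A, ∃ l : ℝ, l ∈ Set.Icc (0 : ℝ) 1 ∧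
      SolvesNested Qc Qr β
        (fun a => (1 - l) * (if a = a1 then 1 else 0) + l * (if a = a2 then 1 else 0)) :=
  nested_program_two_point_solution_general Qr Qc β hfeas
end
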